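/- Let κ ≥ 2, [n] = sin(nπ/κ)/sin(π/κ), and μ(k,l) = [k+1][l+1][k+l+2]/[2]. For integers k ≥ 0, l ≥ 1 with [l] ≠ 0 and k+l+3 < κ, the number λ = [l+2]/[l] satisfies μ(k+1,l−1)·λ + μ(k,l+1)·λ^{−1} = μ(k,l) + μ(k+1,l). -/

import Mathlib

/-- Quantum integer `[n] = sin(nπ/κ)/sin(π/κ)`. -/
noncomputable def qint (κ : ℕ) (n : ℕ) : ℝ :=
  Real.sin (n * Real.pi / κ) / Real.sin (Real.pi / κ)

/-- Quantum dimension `μ(k,l) = [k+1][l+1][k+l+2]/[2]`. -/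
noncomputable def quantumDim (κ k l : ℕ) : ℝ :=
  qint κ (k+1) * qint κ (l+1) * qint κ (k+l+2) / qint κ 2

/-!
Multiplying by `[2]` and cancelling `λ` against `[l]` and `[l+2]`, the claim becomes the identity
`[k+2]([l+2][k+l+2] - [l+1][k+l+3]) = [k+1]([l+1][k+l+2] - [l][k+l+3])`.
Both sides equal `[k+1][k+2]` by the quantum-integer identity `[m+1][d+m] - [m][d+m+1] = [d]`,
which is the trigonometric identity `sin x sin y - sin (x - s) sin (y + s) = sin s sin (y - x + s)`.
-/

theorem Real.sin_mul_sin_sub_sin_sub_mul_sin_add (x y s : ℝ) :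
    Real.sin x * Real.sin y - Real.sin (x - s) * Real.sin (y + s) =
      Real.sin s * Real.sin (y - x + s) := by
  simp only [Real.sin_add, Real.sin_sub, Real.cos_sub]
  linear_combination -(Real.sin x * Real.sin y * Real.sin_sq_add_cos_sq s)

theorem qint_succ_mul_sub_mul_succ (κ m d : ℕ) :
    qint κ (m + 1) * qint κ (d + m) - qint κ m * qint κ (d + m + 1) = qint κ d := by
  have htrig := Real.sin_mul_sin_sub_sin_sub_mul_sin_add ((m + 1) * Real.pi / κ)
    ((d + m) * Real.pi / κ) (Real.pi / κ)
  rw [show ((m : ℝ) + 1) * Real.pi / κ - Real.pi / κ = m * Real.pi / κ by ring,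
    show ((d : ℝ) + m) * Real.pi / κ + Real.pi / κ = (d + m + 1) * Real.pi / κ by ring,
    show ((d : ℝ) + m) * Real.pi / κ - (m + 1) * Real.pi / κ + Real.pi / κ =
      d * Real.pi / κ by ring] at htrig
  simp only [qint]
  push_cast
  rw [div_mul_div_comm, div_mul_div_comm, ← sub_div, htrig]
  rcases eq_or_ne (Real.sin (Real.pi / κ)) 0 with hs | hs
  · simp [hs]
  · field_simp

theorem qint_pos {κ n : ℕ} (hn : 0 < n) (hnκ : n < κ) : 0 < qint κ n := by
  have hκ : (0 : ℝ) < κ := by exact_mod_cast hn.trans hnκ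
  have hsin : ∀ j : ℕ, 0 < j → j < κ → 0 < Real.sin (j * Real.pi / κ) := fun j hj hjκ =>
    Real.sin_pos_of_pos_of_lt_pi (by positivity)
      ((div_lt_iff₀ hκ).2 (by rw [mul_comm]; gcongr))
  exact div_pos (hsin n hn hnκ) (by simpa using hsin 1 one_pos (by omega))

theorem lambda_root_general (κ k l : ℕ) (hl : 1 ≤ l)
    (hlne : qint κ l ≠ 0) (h : k + l + 3 < κ) :
    quantumDim κ (k+1) (l-1) * (qint κ (l+2) / qint κ l) +
      quantumDim κ k (l+1) * (qint κ (l+2) / qint κ l)⁻¹ =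
      quantumDim κ k l + quantumDim κ (k+1) l := by
  have h₂ : qint κ 2 ≠ 0 := (qint_pos (by omega) (by omega)).ne'
  have hl₂ : qint κ (l + 2) ≠ 0 := (qint_pos (by omega) (by omega)).ne'
  have e₁ : qint κ (l + 2) * qint κ (k + l + 2) - qint κ (l + 1) * qint κ (k + l + 3) =
      qint κ (k + 1) := by
    convert qint_succ_mul_sub_mul_succ κ (l + 1) (k + 1) using 4 <;> omega
  have e₂ : qint κ (l + 1) * qint κ (k + l + 2) - qint κ l * qint κ (k + l + 3) =
      qint κ (k + 2) := by
    convert qint_succ_mul_sub_mul_succ κ l (k + 2) using 4 <;> omega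
  simp only [quantumDim, Nat.sub_add_cancel hl,
    show k + 1 + (l - 1) + 2 = k + l + 2 by omega, show k + (l + 1) + 2 = k + l + 3 by omega,
    show k + 1 + l + 2 = k + l + 3 by omega, show k + 1 + 1 = k + 2 by omega]
  field_simp
  linear_combination qint κ (k + 2) * e₁ - qint κ (k + 1) * e₂

theorem lambda_root (κ k l : ℕ) (hκ : 2 ≤ κ) (hl : 1 ≤ l)
    (hlne : qint κ l ≠ 0) (h : k + l + 3 < κ) :
    quantumDim κ (k+1) (l-1) * (qint κ (l+2) / qint κ l) +
      quantumDim κ k (l+1) * (qint κ (l+2) / qint κ l)⁻¹ =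
      quantumDim κ k l + quantumDim κ (k+1) l :=
  lambda_root_general κ k l hl hlne h
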